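/- arXiv:2210.05431 — 6 statements merged into one kernel-verified Lean document; each statement's English description precedes it below -/
import Mathlib

section
/- For x > 1, the function W̄₋₁(x) := -W₋₁(-e^{-x}) (where W₋₁ is the negative branch of the Lambert W function) satisfies x + log x ≤ W̄₋₁(x) ≤ x + log x + min{1/2, 1/√x}. -/
/-!
`W x` is a root of the increasing function `z ↦ z - log z` on `[1, ∞)` at level `x`, so it
suffices to compare that function at the two candidate bounds with `x`. At `x + log x` it is
at most `x` because `log (x + log x) ≥ log x`. At `z = x + log x + c` we have
`log z ≤ log x + c` as soon as `z ≤ x (1 + c + c² / 2) ≤ x e^c`, which reduces to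
`log x ≤ (x - 1) c + x c² / 2`; for `c = 1/2` this is `log x ≤ 5x/8 - 1/2`, and for
`c = 1/√x` (when `x ≥ 4`) it follows from `log x ≤ √x`.
-/

open Real Set

lemma strictMonoOn_sub_log : StrictMonoOn (fun z : ℝ => z - log z) (Ici 1) := by
  intro a (ha : 1 ≤ a) b _ hab
  have ha0 : 0 < a := one_pos.trans_le ha
  have hb0 : 0 < b := ha0.trans hab
  have hlog : log (b / a) < b / a - 1 :=
    log_lt_sub_one_of_pos (by positivity) (by rw [Ne, div_eq_one_iff_eq ha0.ne']; exact hab.ne')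
  have hquot : b / a - 1 ≤ b - a := by
    rw [div_sub_one ha0.ne', div_le_iff₀ ha0]
    nlinarith
  rw [log_div hb0.ne' ha0.ne'] at hlog
  simp only
  linarith

lemma log_le_five_eighths_mul_sub_half {x : ℝ} (hx : 0 < x) : log x ≤ 5 * x / 8 - 1 / 2 := by
  have htangent : log (5 / 8 * x) ≤ 5 / 8 * x - 1 := log_le_sub_one_of_pos (by positivity)
  -- `log (8/5) ≤ 1/2` amounts to `(8/5)² = 2.56 ≤ e`
  have hconst : log (8 / 5) ≤ 1 / 2 := by
    rw [log_le_iff_le_exp (by norm_num)]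
    have hsq : exp (1 / 2) ^ 2 = exp 1 := by rw [← exp_nat_mul]; norm_num
    nlinarith [exp_one_gt_d9, exp_pos (1 / 2 : ℝ)]
  rw [log_mul (by norm_num) hx.ne', show (5 / 8 : ℝ) = (8 / 5)⁻¹ by norm_num, log_inv] at htangent
  linarith

lemma log_le_sqrt {x : ℝ} (hx : 0 < x) : log x ≤ √x := by
  have hs : 0 < √x := sqrt_pos.mpr hx
  have htangent : log (√x / 2) ≤ √x / 2 - 1 := log_le_sub_one_of_pos (by positivity)
  have hlog2 : log 2 ≤ 1 := by linarith [log_le_sub_one_of_pos (zero_lt_two' ℝ)]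
  rw [log_div hs.ne' two_ne_zero, log_sqrt hx.le] at htangent
  linarith

lemma log_le_quadratic_min_half_inv_sqrt {x : ℝ} (hx : 1 ≤ x) :
    log x ≤ (x - 1) * min (1 / 2) (1 / √x) + x * min (1 / 2) (1 / √x) ^ 2 / 2 := by
  have hx0 : 0 < x := one_pos.trans_le hx
  have hs : 0 < √x := sqrt_pos.mpr hx0
  rcases le_total x 4 with hx4 | hx4
  · have hs2 : √x ≤ 2 := sqrt_le_iff.mpr ⟨zero_le_two, by norm_num [hx4]⟩
    rw [min_eq_left (by rw [le_div_iff₀ hs]; linarith)]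
    linarith [log_le_five_eighths_mul_sub_half hx0]
  · have hs2 : 2 ≤ √x := le_sqrt_of_sq_le (by norm_num [hx4])
    rw [min_eq_right (by rw [div_le_div_iff₀ hs two_pos]; linarith)]
    have hsq : √x ^ 2 = x := sq_sqrt hx0.le
    have hinv : 1 / √x ≤ 1 / 2 := one_div_le_one_div_of_le two_pos hs2
    have hexpand : (x - 1) * (1 / √x) + x * (1 / √x) ^ 2 / 2 = √x - 1 / √x + 1 / 2 := by
      field_simp
      linear_combination (-1 - 2 * √x) * hsq
    linarith [log_le_sqrt hx0]

lemma le_add_log_add_sub_log {x c : ℝ} (hx : 1 ≤ x) (hc : 0 ≤ c)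
    (h : log x ≤ (x - 1) * c + x * c ^ 2 / 2) :
    x ≤ (x + log x + c) - log (x + log x + c) := by
  have hx0 : 0 < x := one_pos.trans_le hx
  have hlx : 0 ≤ log x := log_nonneg hx
  have hle : x + log x + c ≤ x * exp c :=
    calc x + log x + c ≤ x * (1 + c + c ^ 2 / 2) := by linarith
      _ ≤ x * exp c := mul_le_mul_of_nonneg_left (quadratic_le_exp_of_nonneg hc) hx0.le
  have hlog : log (x + log x + c) ≤ log x + c := by
    simpa only [log_mul hx0.ne' (exp_pos c).ne', log_exp] using
      log_le_log (by linarith) hle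
  linarith

/-- For `x > 1`, the function `W̄₋₁` (characterized as the largest solution
`z ≥ 1` of `z - log z = x`) satisfies `x + log x ≤ W̄₋₁ x ≤ x + log x + min (1/2) (1/√x)`. -/
theorem stmt_0 (W : ℝ → ℝ)
    (hW : ∀ x : ℝ, 1 ≤ x →
      1 ≤ W x ∧ W x - Real.log (W x) = x ∧ ∀ z : ℝ, 1 ≤ z → z - Real.log z = x → z ≤ W x) :
    ∀ x : ℝ, 1 < x →
      x + Real.log x ≤ W x ∧
      W x ≤ x + Real.log x + min (1/2 : ℝ) (1 / Real.sqrt x) := by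
  intro x hx
  obtain ⟨hW1, hWx, -⟩ := hW x hx.le
  have hx0 : 0 < x := one_pos.trans hx
  have hlx : 0 ≤ log x := log_nonneg hx.le
  have hc : 0 ≤ min (1 / 2 : ℝ) (1 / √x) := le_min (by norm_num) (by positivity)
  constructor
  · refine (strictMonoOn_sub_log.le_iff_le (show 1 ≤ x + log x by linarith) hW1).mp ?_
    have : log x ≤ log (x + log x) := log_le_log hx0 (by linarith)
    simp only [hWx]
    linarith
  · refine (strictMonoOn_sub_log.le_iff_le hW1 (show 1 ≤ x + log x + _ by linarith)).mp ?_
    simpa only [hWx] using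
      le_add_log_add_sub_log hx.le hc (log_le_quadratic_min_half_inv_sqrt hx.le)
end

section
/- For a, b ≥ 1, the minimal value over η > 0 of f(η) = (1+η)(a + ln(b + 1/η)) is at most 1 - b + W̄₋₁(a + b), with equality when b = 1. -/
/-!
Write `w = W̄₋₁(a + b)`, so that `log w = w - a - b` and `w > 1`. At `η = 1/(w - 1)` the bound
`log x ≤ x - 1`, applied to `x = (b + w - 1)/w`, gives `f η ≤ 1 - b + w`. For `b = 1` the same bound,
applied to `x = w/(1 + 1/η)`, gives `w ≤ f η` for every `η > 0`. A minimiser exists because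
`f η ≥ 1 + η` and `f η ≥ a - log η`, so `f` is large near `0` and near `∞`.
-/

open Real Set

theorem IsCompact.exists_isMinOn_of_le_of_notMem {α β : Type*} [LinearOrder α]
    [TopologicalSpace α] [ClosedIicTopology α] [TopologicalSpace β] {f : β → α} {s K : Set β}
    (hK : IsCompact K) (hKs : K ⊆ s) (hf : ContinuousOn f K) {x₀ : β} (hx₀ : x₀ ∈ K)
    (hle : ∀ x ∈ s, x ∉ K → f x₀ ≤ f x) : ∃ x ∈ s, IsMinOn f s x := by
  obtain ⟨x, hxK, hmin⟩ := hK.exists_isMinOn ⟨x₀, hx₀⟩ hf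
  refine ⟨x, hKs hxK, fun y hy => ?_⟩
  by_cases hyK : y ∈ K
  · exact hmin hyK
  · exact (hmin hx₀).trans (hle y hy hyK)

noncomputable def objective (a b η : ℝ) : ℝ := (1 + η) * (a + log (b + 1/η))

section Objective

variable {a b : ℝ}

theorem continuousOn_objective (hb : 0 ≤ b) : ContinuousOn (objective a b) (Ioi 0) := by
  have hpos : ∀ η ∈ Ioi (0 : ℝ), b + 1/η ≠ 0 := fun η hη => by
    have : (0 : ℝ) < η := hη
    positivity
  unfold objective
  refine (continuousOn_const.add continuousOn_id).mul
    (continuousOn_const.add (ContinuousOn.log ?_ hpos))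
  exact continuousOn_const.add
    (continuousOn_const.div continuousOn_id fun η hη => (mem_Ioi.mp hη).ne')

theorem one_le_add_log_add_one_div (ha : 1 ≤ a) (hb : 1 ≤ b) {η : ℝ} (hη : 0 < η) :
    1 ≤ a + log (b + 1/η) := by
  have : 0 < 1/η := by positivity
  have : 0 ≤ log (b + 1/η) := log_nonneg (by linarith)
  linarith

theorem one_add_le_objective (ha : 1 ≤ a) (hb : 1 ≤ b) {η : ℝ} (hη : 0 < η) :
    1 + η ≤ objective a b η := by
  have := one_le_add_log_add_one_div ha hb hη
  unfold objective
  nlinarith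

theorem sub_log_le_objective (ha : 1 ≤ a) (hb : 1 ≤ b) {η : ℝ} (hη : 0 < η) :
    a - log η ≤ objective a b η := by
  have hlog : -log η ≤ log (b + 1/η) := by
    rw [← log_inv, ← one_div]
    exact log_le_log (by positivity) (by linarith)
  have := one_le_add_log_add_one_div ha hb hη
  unfold objective
  nlinarith

theorem objective_one_div_sub_one_le {w : ℝ} (hw : 1 < w) (hb : 0 < b)
    (hlog : w - log w = a + b) : objective a b (1 / (w - 1)) ≤ 1 - b + w := by
  have hw0 : 0 < w := by linarith
  have hw1 : 0 < w - 1 := by linarith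
  have hlog_le := log_le_sub_one_of_pos (show 0 < (b + (w - 1)) / w by positivity)
  rw [log_div (by positivity) hw0.ne'] at hlog_le
  have hbound : a + log (b + (w - 1)) ≤ w - b + (b - 1) / w := by
    have : (b + (w - 1)) / w - 1 = (b - 1) / w := by field_simp; ring
    linarith
  calc objective a b (1 / (w - 1)) = w / (w - 1) * (a + log (b + (w - 1))) := by
        unfold objective
        rw [one_div_one_div]
        congr 1
        field_simp
        ring
    _ ≤ w / (w - 1) * (w - b + (b - 1) / w) := by gcongr
    _ = 1 - b + w := by field_simp; ring

theorem le_objective_one {w : ℝ} (hw : 0 < w) (hlog : w - log w = a + 1) {η : ℝ} (hη : 0 < η) :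
    w ≤ objective a 1 η := by
  have hu : 0 < 1 + 1/η := by positivity
  have hlog_le := log_le_sub_one_of_pos (div_pos hw hu)
  rw [log_div hw.ne' hu.ne'] at hlog_le
  calc w = (1 + η) * (w - w / (1 + 1/η)) := by field_simp; ring
    _ ≤ objective a 1 η := by
        unfold objective
        gcongr
        linarith

theorem exists_isMinOn_objective (ha : 1 ≤ a) (hb : 1 ≤ b) :
    ∃ η ∈ Ioi 0, IsMinOn (objective a b) (Ioi 0) η := by
  set C := objective a b 1
  have hC : 1 ≤ C := by linarith [one_add_le_objective ha hb one_pos]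
  have haC : exp (a - C) ≤ 1 := by
    have := sub_log_le_objective ha hb one_pos
    rw [log_one, sub_zero] at this
    exact exp_le_one_iff.mpr (by linarith)
  have hK : Icc (exp (a - C)) C ⊆ Ioi 0 := fun η hη => (exp_pos _).trans_le hη.1
  refine isCompact_Icc.exists_isMinOn_of_le_of_notMem hK
    ((continuousOn_objective (by linarith)).mono hK) ⟨haC, by linarith⟩ fun η hη hηK => ?_
  rcases not_and_or.mp hηK with hsmall | hlarge
  · have : log η < a - C := (log_lt_iff_lt_exp hη).mpr (not_le.mp hsmall)
    linarith [sub_log_le_objective ha hb hη]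
  · linarith [one_add_le_objective ha hb hη, not_le.mp hlarge]

end Objective

/-- For `a, b ≥ 1`, the minimal value over `η > 0` of
`f η = (1+η)(a + log (b + 1/η))` is attained at some `η⋆` and is at most
`1 - b + W̄₋₁ (a + b)`, with equality when `b = 1`. -/
theorem stmt_4 (W : ℝ → ℝ)
    (hW : ∀ x : ℝ, 1 ≤ x →
      1 ≤ W x ∧ W x - Real.log (W x) = x ∧ ∀ z : ℝ, 1 ≤ z → z - Real.log z = x → z ≤ W x)
    (a b : ℝ) (ha : 1 ≤ a) (hb : 1 ≤ b) :
    ∃ η : ℝ, 0 < η ∧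
      (∀ η' : ℝ, 0 < η' →
        (1 + η) * (a + Real.log (b + 1/η)) ≤ (1 + η') * (a + Real.log (b + 1/η'))) ∧
      (1 + η) * (a + Real.log (b + 1/η)) ≤ 1 - b + W (a + b) ∧
      (b = 1 → (1 + η) * (a + Real.log (b + 1/η)) = 1 - b + W (a + b)) := by
  obtain ⟨hw1, hwlog, -⟩ := hW (a + b) (by linarith)
  have hw : 1 < W (a + b) := by linarith [log_nonneg hw1]
  obtain ⟨η, hη, hmin⟩ := exists_isMinOn_objective ha hb
  have hup : objective a b η ≤ 1 - b + W (a + b) :=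
    (hmin (one_div_pos.mpr (sub_pos.mpr hw))).trans
      (objective_one_div_sub_one_le hw (by linarith) hwlog)
  refine ⟨η, hη, fun η' hη' => hmin hη', hup, ?_⟩
  rintro rfl
  exact hup.antisymm (by linarith [le_objective_one (by linarith) hwlog hη])
end

section
/- Consider a sequence of Bernoulli-like tracking decisions: at each step n, given a count c_n and a target β ∈ (0,1), set x_{n+1} = x_n + 1 if x_n ≤ β(c_n + 1) and x_{n+1} = x_n otherwise, where c_{n+1} = c_n + 1 at each step and x_0 = c_0 = 0. Then for all n, -1/2 ≤ x_n - β c_n ≤ 1. -/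
/-! The tracking error `x n - β n` in fact stays in `[0, 1]`: a step that increments moves it
from `[0, β]` by `1 - β`, a step that does not moves it from `(β, 1]` by `-β`, and both land in
`[0, 1]` when `0 ≤ β ≤ 1`. -/

lemma tracking_error_step {β y c : ℝ} (hβ : β ∈ Set.Icc (0 : ℝ) 1)
    (hy : y - β * c ∈ Set.Icc (0 : ℝ) 1) :
    (if y ≤ β * (c + 1) then y + 1 else y) - β * (c + 1) ∈ Set.Icc (0 : ℝ) 1 := by
  obtain ⟨hβ0, hβ1⟩ := hβ
  obtain ⟨hy0, hy1⟩ := hy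
  split_ifs with hinc
  · constructor <;> linarith
  · constructor <;> linarith

lemma tracking_error_mem_Icc {β : ℝ} (hβ : β ∈ Set.Icc (0 : ℝ) 1) {x : ℕ → ℝ} (hx0 : x 0 = 0)
    (hstep : ∀ n : ℕ, x (n + 1) = if x n ≤ β * ((n : ℝ) + 1) then x n + 1 else x n) (n : ℕ) :
    x n - β * n ∈ Set.Icc (0 : ℝ) 1 := by
  induction n with
  | zero => simp [hx0]
  | succ n ih =>
    rw [hstep n, Nat.cast_succ]
    exact tracking_error_step hβ ih

/-- Two-point C-tracking guarantee: with `x 0 = 0` and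
`x (n+1) = x n + 1` if `x n ≤ β (n+1)`, else `x (n+1) = x n`, one has
`-1/2 ≤ x n - β n ≤ 1` for all `n`. -/
theorem stmt_6 (β : ℝ) (hβ : β ∈ Set.Ioo (0 : ℝ) 1) (x : ℕ → ℝ)
    (hx0 : x 0 = 0)
    (hstep : ∀ n : ℕ, x (n + 1) = if x n ≤ β * ((n : ℝ) + 1) then x n + 1 else x n) :
    ∀ n : ℕ, -1/2 ≤ x n - β * n ∧ x n - β * n ≤ 1 := by
  intro n
  obtain ⟨hlow, hup⟩ := tracking_error_mem_Icc (Set.Ioo_subset_Icc_self hβ) hx0 hstep n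
  exact ⟨by linarith, hup⟩
end

section
/- For β ∈ (0,1) and a K-armed Gaussian bandit μ with unique best arm i*, the β-characteristic time satisfies T*_β(μ) = 2 r_β(μ)/β, where r_β(μ) is the unique solution r in (1/min_{i≠i*}(μ_{i*}-μ_i)², ∞) of Σ_{i≠i*} 1/(r(μ_{i*}-μ_i)² - 1) = (1-β)/β, and the function r ↦ Σ_{i≠i*} 1/(r(μ_{i*}-μ_i)² - 1) - (1-β)/β is convex and decreasing on that interval. -/
/-!
With `dᵢ = (μ_{i⋆} - μᵢ)²`, each term `r ↦ 1/(r dᵢ - 1)` is convex and strictly decreasing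
on `r > 1/m`, so the same holds for their sum, which runs from `+∞` (near `1/m`) down to
`0`; hence the equation `Σ 1/(r dᵢ - 1) = (1-β)/β` has exactly one root `r`.

At a weight vector with `w_{i⋆} = β`, the cost `dᵢ/(2(1/β + 1/wᵢ))` of arm `i` exceeds
`β/(2r)` exactly when `wᵢ > β/(r dᵢ - 1)`. The weights `wᵢ = β/(r dᵢ - 1)` sum to
`1 - β` by the root equation, so they give a feasible allocation with all costs equal to
`β/(2r)`, while an allocation with all costs above `β/(2r)` would have total weight
exceeding `1`.
-/

open Finset

theorem ConvexOn.finset_sum {ι E : Type*} [AddCommMonoid E] [Module ℝ E] {s : Set E}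
    {t : Finset ι} {f : ι → E → ℝ} (hs : Convex ℝ s)
    (h : ∀ i ∈ t, ConvexOn ℝ s (f i)) :
    ConvexOn ℝ s (fun x => ∑ i ∈ t, f i x) := by
  classical
  induction t using Finset.induction with
  | empty => simpa using convexOn_const (0 : ℝ) hs
  | insert a t ha ih =>
    simp only [Finset.sum_insert ha]
    exact (h a (mem_insert_self a t)).add (ih fun i hi => h i (mem_insert_of_mem hi))

lemma convexOn_one_div_mul_sub_one {d : ℝ} (hd : 0 < d) :
    ConvexOn ℝ (Set.Ioi (1 / d)) (fun r : ℝ => 1 / (r * d - 1)) := by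
  let g : ℝ →ᵃ[ℝ] ℝ := AffineMap.lineMap (-1) (d - 1)
  have hg : ∀ r, g r = r * d - 1 := fun r => by
    simp only [g, AffineMap.lineMap_apply_ring']
    ring
  have hpre : g ⁻¹' Set.Ioi 0 = Set.Ioi (1 / d) := by
    ext r
    simp only [Set.mem_preimage, Set.mem_Ioi, hg, sub_pos, div_lt_iff₀ hd]
  have := (convexOn_zpow (𝕜 := ℝ) (-1)).comp_affineMap g
  rw [hpre] at this
  exact this.congr fun r _ => by simp only [Function.comp_apply, hg, zpow_neg_one, one_div]

lemma strictAntiOn_one_div_mul_sub_one {d : ℝ} (hd : 0 < d) :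
    StrictAntiOn (fun r : ℝ => 1 / (r * d - 1)) (Set.Ioi (1 / d)) := by
  intro a ha b _ hab
  have ha' : 0 < a * d - 1 := by
    rw [Set.mem_Ioi, div_lt_iff₀ hd] at ha
    linarith
  exact one_div_lt_one_div_of_lt ha' (by nlinarith)

/-- The left-hand side `Σ_{i ∈ s} 1/(r dᵢ - 1)` of the equation defining `r_β`. -/
noncomputable def gapInvSum {ι : Type*} (s : Finset ι) (d : ι → ℝ) (r : ℝ) : ℝ :=
  ∑ i ∈ s, 1 / (r * d i - 1)

section GapInvSum

variable {ι : Type*} {s : Finset ι} {d : ι → ℝ} {m : ℝ}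

lemma Ioi_one_div_subset (hm : 0 < m) {x : ℝ} (hmx : m ≤ x) :
    Set.Ioi (1 / m) ⊆ Set.Ioi (1 / x) :=
  Set.Ioi_subset_Ioi (one_div_le_one_div_of_le hm hmx)

lemma mul_sub_one_pos_of_mem_Ioi (hm : 0 < m) {x r : ℝ} (hmx : m ≤ x)
    (hr : r ∈ Set.Ioi (1 / m)) :
    0 < r * x - 1 := by
  have hr' := Ioi_one_div_subset hm hmx hr
  rw [Set.mem_Ioi, div_lt_iff₀ (hm.trans_le hmx)] at hr'
  linarith

variable (hm : 0 < m) (hmd : ∀ i ∈ s, m ≤ d i)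
include hm hmd

lemma convexOn_gapInvSum : ConvexOn ℝ (Set.Ioi (1 / m)) (gapInvSum s d) :=
  ConvexOn.finset_sum (convex_Ioi _) fun i hi =>
    (convexOn_one_div_mul_sub_one (hm.trans_le (hmd i hi))).subset
      (Ioi_one_div_subset hm (hmd i hi)) (convex_Ioi _)

lemma strictAntiOn_gapInvSum (hs : s.Nonempty) :
    StrictAntiOn (gapInvSum s d) (Set.Ioi (1 / m)) :=
  fun _ ha _ hb hab => sum_lt_sum_of_nonempty hs fun i hi =>
    strictAntiOn_one_div_mul_sub_one (hm.trans_le (hmd i hi))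
      (Ioi_one_div_subset hm (hmd i hi) ha) (Ioi_one_div_subset hm (hmd i hi) hb) hab

lemma continuousOn_gapInvSum : ContinuousOn (gapInvSum s d) (Set.Ioi (1 / m)) :=
  continuousOn_finsetSum _ fun i hi => continuousOn_const.div
    ((continuousOn_id.mul continuousOn_const).sub continuousOn_const)
    fun _ hr => (mul_sub_one_pos_of_mem_Ioi hm (hmd i hi) hr).ne'

/-- The root is bracketed by `(1 + 1/c)/m`, where the term attaining `m` alone equals `c`, and
`(1 + #s/c)/m`, where every term is at most `c/#s`. -/
lemma exists_gapInvSum_eq (hmin : ∃ i ∈ s, d i = m) {c : ℝ} (hc : 0 < c) :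
    ∃ r ∈ Set.Ioi (1 / m), gapInvSum s d r = c := by
  obtain ⟨i₀, hi₀, hdi₀⟩ := hmin
  have hn : (1 : ℝ) ≤ #s := by exact_mod_cast card_pos.mpr ⟨i₀, hi₀⟩
  set a := (1 + 1 / c) / m
  set b := (1 + #s / c) / m
  have ha : a ∈ Set.Ioi (1 / m) := div_lt_div_of_pos_right (by simp [hc]) hm
  have hab : a ≤ b := by unfold a b; gcongr
  have hIcc : Set.Icc a b ⊆ Set.Ioi (1 / m) := fun r hr => lt_of_lt_of_le ha hr.1
  have hb : b ∈ Set.Ioi (1 / m) := hIcc ⟨hab, le_rfl⟩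
  have ham : a * m - 1 = 1 / c := by unfold a; field_simp; ring
  have hbm : b * m - 1 = #s / c := by unfold b; field_simp; ring
  have hca : c ≤ gapInvSum s d a := by
    have := single_le_sum (f := fun i => 1 / (a * d i - 1))
      (fun i hi => (one_div_pos.mpr (mul_sub_one_pos_of_mem_Ioi hm (hmd i hi) ha)).le) hi₀
    simpa only [gapInvSum, hdi₀, ham, one_div_one_div] using this
  have hbc : gapInvSum s d b ≤ c := calc
    gapInvSum s d b ≤ ∑ _i ∈ s, 1 / (b * m - 1) := sum_le_sum fun i hi =>
        one_div_le_one_div_of_le (mul_sub_one_pos_of_mem_Ioi hm le_rfl hb)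
          (by nlinarith [hmd i hi, (mul_sub_one_pos_of_mem_Ioi hm le_rfl hb)])
    _ = c := by
        rw [sum_const, nsmul_eq_mul, hbm]
        field_simp
  obtain ⟨r, hr, hrc⟩ := intermediate_value_Icc' hab
    ((continuousOn_gapInvSum hm hmd).mono hIcc) ⟨hbc, hca⟩
  exact ⟨r, hIcc hr, hrc⟩

end GapInvSum

noncomputable def transportCost (β d w : ℝ) : ℝ := d / (2 * (1 / β + 1 / w))

lemma lt_transportCost_iff {β d w r : ℝ} (hβ : 0 < β) (hw : 0 < w) (hr : 0 < r)
    (hrd : 0 < r * d - 1) : β / (2 * r) < transportCost β d w ↔ β / (r * d - 1) < w := by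
  have hcost : transportCost β d w = d * β * w / (2 * (w + β)) := by
    unfold transportCost
    field_simp
  rw [hcost, div_lt_div_iff₀ (by positivity) (by positivity), div_lt_iff₀ hrd]
  constructor <;> intro h <;> nlinarith

lemma transportCost_div_mul_sub_one {β d r : ℝ} (hβ : 0 < β) (hd : d ≠ 0) (hr : r ≠ 0) :
    transportCost β d (β / (r * d - 1)) = β / (2 * r) := by
  unfold transportCost
  field_simp
  ring

section OptimalAllocation

variable {ι : Type*} [Fintype ι] [DecidableEq ι] {istar : ι} {d : ι → ℝ} {β r : ℝ}

lemma sum_erase_div_mul_sub_one (hβ : 0 < β)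
    (hroot : gapInvSum (univ.erase istar) d r = (1 - β) / β) :
    ∑ i ∈ univ.erase istar, β / (r * d i - 1) = 1 - β := by
  simp_rw [div_eq_mul_one_div β]
  rw [← mul_sum]
  unfold gapInvSum at hroot
  rw [hroot]
  field_simp

lemma sum_erase_eq_one_sub {w : ι → ℝ} (hwsum : ∑ i, w i = 1) (hwstar : w istar = β) :
    ∑ i ∈ univ.erase istar, w i = 1 - β := by
  rw [← add_sum_erase _ _ (mem_univ istar), hwstar] at hwsum
  linarith

noncomputable def equalizingWeights (istar : ι) (d : ι → ℝ) (β r : ℝ) (i : ι) : ℝ :=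
  if i = istar then β else β / (r * d i - 1)

lemma sum_equalizingWeights (hβ : 0 < β)
    (hroot : gapInvSum (univ.erase istar) d r = (1 - β) / β) :
    ∑ i, equalizingWeights istar d β r i = 1 := by
  have hoff : ∀ i ∈ univ.erase istar, equalizingWeights istar d β r i = β / (r * d i - 1) :=
    fun i hi => if_neg (ne_of_mem_erase hi)
  rw [← add_sum_erase _ _ (mem_univ istar), sum_congr rfl hoff,
    sum_erase_div_mul_sub_one hβ hroot, equalizingWeights, if_pos rfl, add_sub_cancel]

lemma exists_le_transportCost_of_gapInvSum_eq (hβ : 0 < β) (hr : 0 < r)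
    (hrd : ∀ i, i ≠ istar → 0 < r * d i - 1)
    (hroot : gapInvSum (univ.erase istar) d r = (1 - β) / β) (hs : (univ.erase istar).Nonempty)
    {w : ι → ℝ} (hw : ∀ i, 0 < w i) (hwsum : ∑ i, w i = 1) (hwstar : w istar = β) :
    ∃ i, i ≠ istar ∧ transportCost β (d i) (w i) ≤ β / (2 * r) := by
  by_contra! h
  have hlt : 1 - β < 1 - β := calc
    1 - β = ∑ i ∈ univ.erase istar, β / (r * d i - 1) :=
        (sum_erase_div_mul_sub_one hβ hroot).symm
    _ < ∑ i ∈ univ.erase istar, w i := by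
        refine sum_lt_sum_of_nonempty hs fun i hi => ?_
        have hi := ne_of_mem_erase hi
        exact (lt_transportCost_iff hβ (hw i) hr (hrd i hi)).1 (h i hi)
    _ = 1 - β := sum_erase_eq_one_sub hwsum hwstar
  exact lt_irrefl _ hlt

theorem isGreatest_min_transportCost (hβ : 0 < β) (hr : 0 < r)
    (hrd : ∀ i, i ≠ istar → 0 < r * d i - 1)
    (hroot : gapInvSum (univ.erase istar) d r = (1 - β) / β) (hs : (univ.erase istar).Nonempty) :
    IsGreatest {y : ℝ | ∃ w : ι → ℝ, (∀ i, 0 < w i) ∧ (∑ i, w i) = 1 ∧ w istar = β ∧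
        (∀ i, i ≠ istar → y ≤ transportCost β (d i) (w i)) ∧
        (∃ i, i ≠ istar ∧ y = transportCost β (d i) (w i))}
      (β / (2 * r)) := by
  have hcost : ∀ i, i ≠ istar →
      transportCost β (d i) (equalizingWeights istar d β r i) = β / (2 * r) := fun i hi => by
      have hd : d i ≠ 0 := fun h => by linarith [h ▸ hrd i hi]
      rw [equalizingWeights, if_neg hi, transportCost_div_mul_sub_one hβ hd hr.ne']
  refine ⟨⟨equalizingWeights istar d β r, fun i => ?_, sum_equalizingWeights hβ hroot,
    if_pos rfl, fun i hi => (hcost i hi).ge, ?_⟩, ?_⟩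
  · unfold equalizingWeights
    split_ifs with hi
    exacts [hβ, div_pos hβ (hrd i hi)]
  · obtain ⟨i, hi⟩ := hs
    exact ⟨i, ne_of_mem_erase hi, (hcost i (ne_of_mem_erase hi)).symm⟩
  · rintro y ⟨w, hw, hwsum, hwstar, hyw, -⟩
    obtain ⟨i, hi, hle⟩ :=
      exists_le_transportCost_of_gapInvSum_eq hβ hr hrd hroot hs hw hwsum hwstar
    exact (hyw i hi).trans hle

end OptimalAllocation

theorem stmt_9_general (K : ℕ) (μ : Fin K → ℝ) (istar : Fin K)
    (hbest : ∀ i, i ≠ istar → μ i < μ istar)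
    (β : ℝ) (hβ : β ∈ Set.Ioo (0 : ℝ) 1)
    (m : ℝ) (hm : IsLeast {d : ℝ | ∃ i, i ≠ istar ∧ d = (μ istar - μ i)^2} m) :
    ConvexOn ℝ (Set.Ioi (1/m))
      (fun r => (∑ i ∈ Finset.univ.erase istar, 1 / (r * (μ istar - μ i)^2 - 1)) - (1-β)/β) ∧
    StrictAntiOn
      (fun r => (∑ i ∈ Finset.univ.erase istar, 1 / (r * (μ istar - μ i)^2 - 1)) - (1-β)/β)
      (Set.Ioi (1/m)) ∧
    ∃ r ∈ Set.Ioi (1/m),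
      (∑ i ∈ Finset.univ.erase istar, 1 / (r * (μ istar - μ i)^2 - 1)) - (1-β)/β = 0 ∧
      (∀ r' ∈ Set.Ioi (1/m),
        (∑ i ∈ Finset.univ.erase istar, 1 / (r' * (μ istar - μ i)^2 - 1)) - (1-β)/β = 0 →
        r' = r) ∧
      IsGreatest {y : ℝ | ∃ w : Fin K → ℝ, (∀ i, 0 < w i) ∧ (∑ i, w i) = 1 ∧ w istar = β ∧
          (∀ i, i ≠ istar → y ≤ (μ istar - μ i)^2 / (2 * (1/β + 1/(w i)))) ∧
          (∃ i, i ≠ istar ∧ y = (μ istar - μ i)^2 / (2 * (1/β + 1/(w i))))}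
        (β / (2 * r)) := by
  obtain ⟨hβ0, hβ1⟩ := hβ
  obtain ⟨⟨i₀, hi₀, hmi₀⟩, hmin⟩ := hm
  let d : Fin K → ℝ := fun i => (μ istar - μ i) ^ 2
  have hi₀s : i₀ ∈ univ.erase istar := mem_erase.2 ⟨hi₀, mem_univ _⟩
  have hm0 : 0 < m := hmi₀ ▸ pow_pos (sub_pos.2 (hbest i₀ hi₀)) 2
  have hmd : ∀ i ∈ univ.erase istar, m ≤ d i := fun i hi =>
    hmin ⟨i, ne_of_mem_erase hi, rfl⟩
  obtain ⟨r, hr, hroot⟩ := exists_gapInvSum_eq hm0 hmd ⟨i₀, hi₀s, hmi₀.symm⟩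
    (c := (1 - β) / β) (div_pos (sub_pos.2 hβ1) hβ0)
  have hanti := strictAntiOn_gapInvSum hm0 hmd ⟨i₀, hi₀s⟩
  refine ⟨(convexOn_gapInvSum hm0 hmd).sub (concaveOn_const _ (convex_Ioi _)),
    fun a ha b hb hab => sub_lt_sub_right (hanti ha hb hab) _, r, hr, sub_eq_zero.2 hroot,
    fun r' hr' h => hanti.injOn hr' hr ((sub_eq_zero.1 h).trans hroot.symm),
    isGreatest_min_transportCost hβ0 (lt_trans (by positivity) hr) (fun i hi =>
      mul_sub_one_pos_of_mem_Ioi hm0 (hmd i (mem_erase.2 ⟨hi, mem_univ _⟩)) hr) hroot ⟨i₀, hi₀s⟩⟩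

/-- For `β ∈ (0,1)` and a `K`-armed unit-variance Gaussian bandit with unique
best arm `i⋆`, the function `φ(r) = Σ_{i≠i⋆} 1/(r(μ_{i⋆}-μ_i)² - 1) - (1-β)/β` is convex
and (strictly) decreasing on `(1/min_{i≠i⋆}(μ_{i⋆}-μ_i)², ∞)`, it has a unique root `r_β`
there, and the β-characteristic time satisfies `T*_β(μ) = 2 r_β/β`, i.e. the maximal value
of `min_{i≠i⋆} (μ_{i⋆}-μ_i)²/(2(1/β+1/w_i))` over `w` in the simplex with `w_{i⋆} = β`
equals `β/(2 r_β)`. -/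
theorem stmt_9 (K : ℕ) (hK : 2 ≤ K) (μ : Fin K → ℝ) (istar : Fin K)
    (hbest : ∀ i, i ≠ istar → μ i < μ istar)
    (β : ℝ) (hβ : β ∈ Set.Ioo (0 : ℝ) 1)
    (m : ℝ) (hm : IsLeast {d : ℝ | ∃ i, i ≠ istar ∧ d = (μ istar - μ i)^2} m) :
    ConvexOn ℝ (Set.Ioi (1/m))
      (fun r => (∑ i ∈ Finset.univ.erase istar, 1 / (r * (μ istar - μ i)^2 - 1)) - (1-β)/β) ∧
    StrictAntiOn
      (fun r => (∑ i ∈ Finset.univ.erase istar, 1 / (r * (μ istar - μ i)^2 - 1)) - (1-β)/β)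
      (Set.Ioi (1/m)) ∧
    ∃ r ∈ Set.Ioi (1/m),
      (∑ i ∈ Finset.univ.erase istar, 1 / (r * (μ istar - μ i)^2 - 1)) - (1-β)/β = 0 ∧
      (∀ r' ∈ Set.Ioi (1/m),
        (∑ i ∈ Finset.univ.erase istar, 1 / (r' * (μ istar - μ i)^2 - 1)) - (1-β)/β = 0 →
        r' = r) ∧
      IsGreatest {y : ℝ | ∃ w : Fin K → ℝ, (∀ i, 0 < w i) ∧ (∑ i, w i) = 1 ∧ w istar = β ∧
          (∀ i, i ≠ istar → y ≤ (μ istar - μ i)^2 / (2 * (1/β + 1/(w i)))) ∧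
          (∃ i, i ≠ istar ∧ y = (μ istar - μ i)^2 / (2 * (1/β + 1/(w i))))}
        (β / (2 * r)) :=
  stmt_9_general K μ istar hbest β hβ m hm
end

section
/- For the 'equal means' K-armed Gaussian instance with K ≥ 3, μ_{i*} = 0 and μ_i = -Δ for all i ≠ i* (Δ > 0), one has T*_{1/2}(μ) = 4K/Δ² ; combined with T*(μ) = 2(1+√(K-1))²/Δ², this gives T*_{1/2}(μ)/T*(μ) = 2K/(1+√(K-1))². -/
/-!
With `w_{i⋆} = 1/2` the other `K - 1` arms share mass `1/2`, so one of them has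
`w_i ≤ 1/(2(K-1))`. The Gaussian transportation cost is increasing in `w_i`, so the minimum over the
arms is at most its value at `w_i = 1/(2(K-1))`, namely `Δ²/(4K)`; the uniform split of the
remaining mass attains this bound.
-/

open Finset

noncomputable section

/-- The unit-variance Gaussian cost of arm `i` against `i⋆`, with `d = μ_{i⋆} - μ_i`, `wa = w_{i⋆}`, `wi = w_i`. -/
def gaussianTransportCost (d wa wi : ℝ) : ℝ := d ^ 2 / (2 * (1 / wa + 1 / wi))

lemma gaussianTransportCost_le_of_le {d wa v u : ℝ} (hwa : 0 < wa) (hv : 0 < v) (hvu : v ≤ u) :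
    gaussianTransportCost d wa v ≤ gaussianTransportCost d wa u := by
  unfold gaussianTransportCost
  have hu : 0 < u := hv.trans_le hvu
  gcongr

lemma gaussianTransportCost_half_eq (d n : ℝ) :
    gaussianTransportCost d (1 / 2) (1 / (2 * (n - 1))) = d ^ 2 / (4 * n) := by
  unfold gaussianTransportCost
  rw [one_div_one_div, one_div_one_div]
  ring

section Allocation

variable {ι : Type*} [Fintype ι] [DecidableEq ι]

lemma cast_card_erase (a : ι) : ((univ.erase a).card : ℝ) = Fintype.card ι - 1 := by
  rw [card_erase_of_mem (mem_univ a), card_univ, Nat.cast_pred (Fintype.card_pos_iff.2 ⟨a⟩)]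

def halfUniformWeights (a : ι) (i : ι) : ℝ :=
  if i = a then 1 / 2 else 1 / (2 * ((Fintype.card ι : ℝ) - 1))

lemma halfUniformWeights_pos (hι : 1 < Fintype.card ι) (a i : ι) :
    0 < halfUniformWeights a i := by
  have : (1 : ℝ) < Fintype.card ι := by exact_mod_cast hι
  unfold halfUniformWeights
  split_ifs <;> positivity

lemma halfUniformWeights_self (a : ι) : halfUniformWeights a a = 1 / 2 := if_pos rfl

lemma halfUniformWeights_of_ne {a i : ι} (h : i ≠ a) :
    halfUniformWeights a i = 1 / (2 * ((Fintype.card ι : ℝ) - 1)) := if_neg h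

lemma sum_halfUniformWeights (hι : 1 < Fintype.card ι) (a : ι) :
    ∑ i, halfUniformWeights a i = 1 := by
  have : (Fintype.card ι : ℝ) - 1 ≠ 0 := sub_ne_zero.2 (by exact_mod_cast hι.ne')
  rw [← add_sum_erase _ _ (mem_univ a),
    sum_congr rfl fun i hi => halfUniformWeights_of_ne (ne_of_mem_erase hi), sum_const,
    nsmul_eq_mul, cast_card_erase, halfUniformWeights_self]
  field_simp
  ring

lemma exists_ne_le_of_sum_eq_one (hι : 1 < Fintype.card ι) {w : ι → ℝ} {a : ι}
    (hsum : ∑ i, w i = 1) (ha : w a = 1 / 2) :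
    ∃ i ≠ a, w i ≤ 1 / (2 * ((Fintype.card ι : ℝ) - 1)) := by
  have : (Fintype.card ι : ℝ) - 1 ≠ 0 := sub_ne_zero.2 (by exact_mod_cast hι.ne')
  have hne : (univ.erase a).Nonempty := by
    rw [← card_pos, card_erase_of_mem (mem_univ a), card_univ]; omega
  have hrest : ∑ i ∈ univ.erase a, w i = ∑ _i ∈ univ.erase a, 1 / (2 * ((Fintype.card ι : ℝ) - 1)) := by
    rw [sum_const, nsmul_eq_mul, cast_card_erase, sum_erase_eq_sub (mem_univ a), hsum, ha]
    field_simp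
    ring
  obtain ⟨i, hi, hwi⟩ := exists_le_of_sum_le hne hrest.le
  exact ⟨i, ne_of_mem_erase hi, hwi⟩

/-- The values `min_{i ≠ a}` of the transportation costs over allocations with `w a = 1/2`;
its greatest element is `T*_{1/2}(μ)⁻¹`. -/
def halfAllocationValues (μ : ι → ℝ) (a : ι) : Set ℝ :=
  {y | ∃ w : ι → ℝ, (∀ i, 0 < w i) ∧ ∑ i, w i = 1 ∧ w a = 1 / 2 ∧
    (∀ i, i ≠ a → y ≤ gaussianTransportCost (μ a - μ i) (1 / 2) (w i)) ∧
    (∃ i, i ≠ a ∧ y = gaussianTransportCost (μ a - μ i) (1 / 2) (w i))}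

theorem isGreatest_halfAllocationValues (hι : 1 < Fintype.card ι) {μ : ι → ℝ} {a : ι} {d : ℝ}
    (hgap : ∀ i, i ≠ a → μ a - μ i = d) :
    IsGreatest (halfAllocationValues μ a) (d ^ 2 / (4 * Fintype.card ι)) := by
  obtain ⟨i₀, hi₀⟩ := Fintype.exists_ne_of_one_lt_card hι a
  have hcost : ∀ i, i ≠ a → gaussianTransportCost (μ a - μ i) (1 / 2) (halfUniformWeights a i) =
      d ^ 2 / (4 * Fintype.card ι) := fun i hi => by
    rw [hgap i hi, halfUniformWeights_of_ne hi, gaussianTransportCost_half_eq]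
  refine ⟨⟨halfUniformWeights a, halfUniformWeights_pos hι a, sum_halfUniformWeights hι a,
    halfUniformWeights_self a, fun i hi => (hcost i hi).ge, i₀, hi₀, (hcost i₀ hi₀).symm⟩, ?_⟩
  rintro y ⟨w, hpos, hsum, ha, hle, -⟩
  obtain ⟨i, hi, hwi⟩ := exists_ne_le_of_sum_eq_one hι hsum ha
  calc y ≤ gaussianTransportCost d (1 / 2) (w i) := hgap i hi ▸ hle i hi
    _ ≤ gaussianTransportCost d (1 / 2) (1 / (2 * ((Fintype.card ι : ℝ) - 1))) :=
      gaussianTransportCost_le_of_le one_half_pos (hpos i) hwi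
    _ = d ^ 2 / (4 * Fintype.card ι) := gaussianTransportCost_half_eq _ _

end Allocation

end

/-- For the equal-means `K`-armed Gaussian instance (`K ≥ 3`, `μ_{i⋆} = 0`,
`μ_i = -Δ` for `i ≠ i⋆`, `Δ > 0`), one has `T*_{1/2}(μ) = 4K/Δ²`, i.e. the maximal value of
`min_{i≠i⋆}(μ_{i⋆}-μ_i)²/(2(1/(1/2)+1/w_i))` over simplex vectors with `w_{i⋆} = 1/2` equals
`Δ²/(4K)`; combined with `T*(μ) = 2(1+√(K-1))²/Δ²`, this gives
`T*_{1/2}(μ)/T*(μ) = 2K/(1+√(K-1))²`. -/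
theorem stmt_10 (K : ℕ) (hK : 3 ≤ K) (Δ : ℝ) (hΔ : 0 < Δ)
    (μ : Fin K → ℝ) (istar : Fin K)
    (hstar : μ istar = 0) (hother : ∀ i, i ≠ istar → μ i = -Δ) :
    IsGreatest {y : ℝ | ∃ w : Fin K → ℝ, (∀ i, 0 < w i) ∧ (∑ i, w i) = 1 ∧
        w istar = 1/2 ∧
        (∀ i, i ≠ istar → y ≤ (μ istar - μ i)^2 / (2 * (1/(1/2 : ℝ) + 1/(w i)))) ∧
        (∃ i, i ≠ istar ∧ y = (μ istar - μ i)^2 / (2 * (1/(1/2 : ℝ) + 1/(w i))))}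
      (Δ^2 / (4 * K)) ∧
    (4 * (K : ℝ) / Δ^2) / (2 * (1 + Real.sqrt ((K : ℝ) - 1))^2 / Δ^2)
      = 2 * K / (1 + Real.sqrt ((K : ℝ) - 1))^2 := by
  have hcard : 1 < Fintype.card (Fin K) := by rw [Fintype.card_fin]; omega
  have hgap : ∀ i, i ≠ istar → μ istar - μ i = Δ := fun i hi => by
    rw [hstar, hother i hi, zero_sub, neg_neg]
  constructor
  · have := isGreatest_halfAllocationValues hcard hgap
    rwa [Fintype.card_fin] at this
  · rw [div_div_div_cancel_right₀ (pow_ne_zero 2 hΔ.ne')]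
    field_simp
    ring
end

section
/- For the equal-means instance (K ≥ 3, μ_{i*} - μ_i = Δ > 0 for all i ≠ i*), the value max_{w ∈ Δ_K} min_{i≠i*} Δ²/(2(1/w_{i*} + 1/w_i)) equals Δ²/(2(1+√(K-1))²), attained at w_{i*} = 1/(1+√(K-1)) and w_i = (1 - w_{i*})/(K-1) for i ≠ i*. -/
/-!
Write `c = K - 1` and `t = w_{i⋆}`. Some arm `j ≠ i⋆` carries at most the average `(1 - t)/c`
of the remaining mass, so `1/w_{i⋆} + 1/w_j ≥ 1/t + c/(1 - t) ≥ (1 + √c)²` (Cauchy–Schwarz in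
Engel form), which bounds the objective by `Δ²/(2(1 + √c)²)`. The balanced allocation
`t = 1/(1 + √c)` makes both inequalities equalities for every `j ≠ i⋆`.
-/

open Finset

lemma one_add_sqrt_sq_le_one_div_add_div {c t : ℝ} (hc : 0 ≤ c) (ht₀ : 0 < t) (ht₁ : t < 1) :
    (1 + √c) ^ 2 ≤ 1 / t + c / (1 - t) := by
  have hs : √c ^ 2 = c := Real.sq_sqrt hc
  rw [div_add_div _ _ ht₀.ne' (sub_pos.2 ht₁).ne', le_div_iff₀ (mul_pos ht₀ (sub_pos.2 ht₁))]
  -- the gap is `((1 + √c) t - 1)²`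
  nlinarith [sq_nonneg ((1 + √c) * t - 1)]

lemma one_div_add_one_div_optimal {c : ℝ} (hc : 0 < c) :
    1 / (1 / (1 + √c)) + 1 / ((1 - 1 / (1 + √c)) / c) = (1 + √c) ^ 2 := by
  have hs2 : √c ^ 2 = c := Real.sq_sqrt hc.le
  have hrest : 1 - 1 / (1 + √c) = √c / (1 + √c) := by field_simp; ring
  rw [one_div_one_div, hrest, div_div, one_div_div]
  field_simp
  linear_combination -hs2

section Weights

variable {ι : Type*} [DecidableEq ι]

lemma exists_ne_le_div_card_sub_one [Fintype ι] {w : ι → ℝ} (i₀ : ι) (hsum : ∑ i, w i = 1)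
    (hcard : 2 ≤ Fintype.card ι) :
    ∃ j ≠ i₀, w j ≤ (1 - w i₀) / (Fintype.card ι - 1) := by
  have hc : (0 : ℝ) < Fintype.card ι - 1 := by
    have : (2 : ℝ) ≤ Fintype.card ι := by exact_mod_cast hcard
    linarith
  have hrest : ∑ i ∈ univ.erase i₀, w i = 1 - w i₀ := by
    rw [← hsum, ← add_sum_erase univ w (mem_univ i₀), add_sub_cancel_left]
  have hne : (univ.erase i₀).Nonempty := by
    rw [← card_pos, card_erase_of_mem (mem_univ i₀), card_univ]
    omega
  obtain ⟨j, hj, hle⟩ := exists_le_of_sum_le hne (f := w)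
    (g := fun _ => (1 - w i₀) / (Fintype.card ι - 1)) <| by
      rw [hrest, sum_const, card_erase_of_mem (mem_univ i₀), card_univ, nsmul_eq_mul,
        Nat.cast_sub (by omega : 1 ≤ Fintype.card ι), Nat.cast_one, mul_div_cancel₀ _ hc.ne']
  exact ⟨j, ne_of_mem_erase hj, hle⟩

lemma exists_ne_one_add_sqrt_sq_le [Fintype ι] {w : ι → ℝ} (i₀ : ι) (hpos : ∀ i, 0 < w i)
    (hsum : ∑ i, w i = 1) (hcard : 2 ≤ Fintype.card ι) :
    ∃ j ≠ i₀, (1 + √((Fintype.card ι : ℝ) - 1)) ^ 2 ≤ 1 / w i₀ + 1 / w j := by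
  set c : ℝ := Fintype.card ι - 1
  have hc : 0 < c := by
    have : (2 : ℝ) ≤ Fintype.card ι := by exact_mod_cast hcard
    linarith
  obtain ⟨j, hj, hle⟩ := exists_ne_le_div_card_sub_one i₀ hsum hcard
  have hrest : 0 < 1 - w i₀ := (div_pos_iff_of_pos_right hc).1 ((hpos j).trans_le hle)
  have hj_inv : c / (1 - w i₀) ≤ 1 / w j := by
    rw [div_le_div_iff₀ hrest (hpos j), one_mul, mul_comm]
    exact (le_div_iff₀ hc).1 hle
  refine ⟨j, hj, ?_⟩
  calc (1 + √c) ^ 2 ≤ 1 / w i₀ + c / (1 - w i₀) :=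
        one_add_sqrt_sq_le_one_div_add_div hc.le (hpos i₀) (by linarith)
    _ ≤ 1 / w i₀ + 1 / w j := by gcongr

noncomputable def balancedWeights (i₀ : ι) (c : ℝ) (i : ι) : ℝ :=
  if i = i₀ then 1 / (1 + √c) else (1 - 1 / (1 + √c)) / c

lemma balancedWeights_pos {c : ℝ} (hc : 0 < c) (i₀ i : ι) : 0 < balancedWeights i₀ c i := by
  have h1 : 1 < 1 + √c := by linarith [Real.sqrt_pos.2 hc]
  unfold balancedWeights
  split_ifs
  · positivity
  · exact div_pos (sub_pos.2 ((div_lt_one (by linarith)).2 h1)) hc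

lemma sum_balancedWeights [Fintype ι] {c : ℝ} (hc : 0 < c) (i₀ : ι)
    (hcard : (Fintype.card ι : ℝ) - 1 = c) :
    ∑ i, balancedWeights i₀ c i = 1 := by
  have hothers : ∀ i ∈ univ.erase i₀, balancedWeights i₀ c i = (1 - 1 / (1 + √c)) / c :=
    fun i hi => if_neg (ne_of_mem_erase hi)
  rw [← add_sum_erase univ _ (mem_univ i₀), sum_congr rfl hothers, sum_const,
    card_erase_of_mem (mem_univ i₀), card_univ, nsmul_eq_mul,
    Nat.cast_sub (Fintype.card_pos_iff.2 ⟨i₀⟩), Nat.cast_one, hcard,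
    mul_div_cancel₀ _ hc.ne', balancedWeights, if_pos rfl]
  ring

lemma one_div_add_one_div_balancedWeights {c : ℝ} (hc : 0 < c) {i₀ i : ι} (hi : i ≠ i₀) :
    1 / balancedWeights i₀ c i₀ + 1 / balancedWeights i₀ c i = (1 + √c) ^ 2 := by
  rw [balancedWeights, balancedWeights, if_pos rfl, if_neg hi, one_div_add_one_div_optimal hc]

end Weights

theorem stmt_11_general (K : ℕ) (hK : 3 ≤ K) (Δ : ℝ) (istar : Fin K) :
    IsGreatest {y : ℝ | ∃ w : Fin K → ℝ, (∀ i, 0 < w i) ∧ (∑ i, w i) = 1 ∧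
        (∀ i, i ≠ istar → y ≤ Δ^2 / (2 * (1/(w istar) + 1/(w i)))) ∧
        (∃ i, i ≠ istar ∧ y = Δ^2 / (2 * (1/(w istar) + 1/(w i))))}
      (Δ^2 / (2 * (1 + Real.sqrt ((K : ℝ) - 1))^2)) ∧
    (∀ i : Fin K, i ≠ istar →
      Δ^2 / (2 * (1 / (1 / (1 + Real.sqrt ((K : ℝ) - 1)))
          + 1 / ((1 - 1 / (1 + Real.sqrt ((K : ℝ) - 1))) / ((K : ℝ) - 1))))
        = Δ^2 / (2 * (1 + Real.sqrt ((K : ℝ) - 1))^2)) := by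
  have hc : (0 : ℝ) < K - 1 := by
    have : (3 : ℝ) ≤ K := by exact_mod_cast hK
    linarith
  have hcard : 2 ≤ Fintype.card (Fin K) := by rw [Fintype.card_fin]; omega
  have : Nontrivial (Fin K) := Fintype.one_lt_card_iff_nontrivial.1 hcard
  obtain ⟨j, hj⟩ := exists_ne istar
  refine ⟨⟨⟨balancedWeights istar (K - 1), balancedWeights_pos hc istar,
      sum_balancedWeights hc istar (by rw [Fintype.card_fin]), fun i hi => ?_, j, hj, ?_⟩, ?_⟩,
    fun i hi => by rw [one_div_add_one_div_optimal hc]⟩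
  · rw [one_div_add_one_div_balancedWeights hc hi]
  · rw [one_div_add_one_div_balancedWeights hc hj]
  · rintro y ⟨w, hpos, hsum, hle, -⟩
    obtain ⟨i, hi, hbound⟩ := exists_ne_one_add_sqrt_sq_le istar hpos hsum hcard
    rw [Fintype.card_fin] at hbound
    calc y ≤ Δ ^ 2 / (2 * (1 / w istar + 1 / w i)) := hle i hi
      _ ≤ Δ ^ 2 / (2 * (1 + √((K : ℝ) - 1)) ^ 2) :=
        div_le_div_of_nonneg_left (sq_nonneg Δ) (by positivity) (by linarith)

/-- For the equal-means instance (`K ≥ 3`, all gaps equal to `Δ > 0`), the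
value `max_{w ∈ Δ_K} min_{i≠i⋆} Δ²/(2(1/w_{i⋆}+1/w_i))` equals `Δ²/(2(1+√(K-1))²)`,
attained at `w_{i⋆} = 1/(1+√(K-1))` and `w_i = (1-w_{i⋆})/(K-1)` for `i ≠ i⋆`. -/
theorem stmt_11 (K : ℕ) (hK : 3 ≤ K) (Δ : ℝ) (hΔ : 0 < Δ) (istar : Fin K) :
    IsGreatest {y : ℝ | ∃ w : Fin K → ℝ, (∀ i, 0 < w i) ∧ (∑ i, w i) = 1 ∧
        (∀ i, i ≠ istar → y ≤ Δ^2 / (2 * (1/(w istar) + 1/(w i)))) ∧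
        (∃ i, i ≠ istar ∧ y = Δ^2 / (2 * (1/(w istar) + 1/(w i))))}
      (Δ^2 / (2 * (1 + Real.sqrt ((K : ℝ) - 1))^2)) ∧
    (∀ i : Fin K, i ≠ istar →
      Δ^2 / (2 * (1 / (1 / (1 + Real.sqrt ((K : ℝ) - 1)))
          + 1 / ((1 - 1 / (1 + Real.sqrt ((K : ℝ) - 1))) / ((K : ℝ) - 1))))
        = Δ^2 / (2 * (1 + Real.sqrt ((K : ℝ) - 1))^2)) :=
  stmt_11_general K hK Δ istar
end
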